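/- arXiv:2104.01417 — 3 statements merged into one kernel-verified Lean document; each statement's English description precedes it below -/
import Mathlib

section
/- For every natural number n, the number of crossingless matchings of 2n points, i.e. the number of fixed-point-free involutions σ of Fin (2n) such that there are no indices i < j < σ(i) < σ(j), equals the n-th Catalan number. -/
/-!
In a noncrossing matching of `N + 2` points, let `a + 1` be the partner of `0`. No arc may cross
`{0, a + 1}`, so the `a` points inside it and the `N - a` points after it are matched among
themselves, again without crossings; conversely any two such matchings glue back together.
Hence the counts `c N` satisfy `c 0 = 1`, `c 1 = 0` and `c (N + 2) = ∑ c a * c (N - a)`: the odd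
counts vanish and the even ones obey Catalan's recursion.
-/

open Finset Function

section LinearOrder

variable {α β : Type*} [LinearOrder α] [LinearOrder β]

def IsNoncrossingMatching (σ : α → α) : Prop :=
  Involutive σ ∧ (∀ i, σ i ≠ i) ∧ ¬∃ i j, i < j ∧ j < σ i ∧ σ i < σ j

namespace IsNoncrossingMatching

variable {σ : α → α}

theorem of_semiconj {f : β → β} (hσ : IsNoncrossingMatching σ) (e : β ↪o α)
    (h : Semiconj e f σ) : IsNoncrossingMatching f := by
  obtain ⟨hinv, hfix, hnc⟩ := hσ
  refine ⟨fun x => e.injective ?_, fun x hx => hfix (e x) ?_, ?_⟩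
  · rw [h, h, hinv]
  · rw [← h, hx]
  · rintro ⟨i, j, hij, hji, hcross⟩
    refine hnc ⟨e i, e j, e.lt_iff_lt.2 hij, ?_, ?_⟩
    · rw [← h]; exact e.lt_iff_lt.2 hji
    · rw [← h, ← h]; exact e.lt_iff_lt.2 hcross

theorem apply_mem_Ioo (hσ : IsNoncrossingMatching σ) {i j : α} (hj : j ∈ Set.Ioo i (σ i)) :
    σ j ∈ Set.Ioo i (σ i) := by
  obtain ⟨hinv, -, hnc⟩ := hσ
  obtain ⟨hij, hji⟩ := hj
  have hi : σ j ≠ i := fun h => hji.ne (by rw [← h, hinv])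
  have hσi : σ j ≠ σ i := fun h => hij.ne' (hinv.injective h)
  refine ⟨lt_of_not_ge fun h => hnc ⟨σ j, i, h.lt_of_ne hi, ?_, ?_⟩,
    lt_of_not_ge fun h => hnc ⟨i, j, hij, hji, h.lt_of_ne' hσi⟩⟩ <;> rwa [hinv]

end IsNoncrossingMatching

def NoncrossingMatching (α : Type*) [LinearOrder α] : Type _ :=
  {σ : Equiv.Perm α // IsNoncrossingMatching ⇑σ}

end LinearOrder

def Fin.shiftEmb {L M : ℕ} (d : ℕ) (h : d + L ≤ M) : Fin L ↪o Fin M :=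
  OrderEmbedding.ofStrictMono (fun j => ⟨j + d, by omega⟩) fun _ _ hlt =>
    Fin.mk_lt_mk.2 (Nat.add_lt_add_right hlt d)

@[simp]
theorem Fin.val_shiftEmb {L M d : ℕ} (h : d + L ≤ M) (j : Fin L) :
    (Fin.shiftEmb d h j : ℕ) = j + d := rfl

theorem Fin.range_shiftEmb {L M d : ℕ} (h : d + L ≤ M) :
    Set.range (Fin.shiftEmb d h) = {i : Fin M | d ≤ (i : ℕ) ∧ (i : ℕ) < d + L} := by
  ext i
  constructor
  · rintro ⟨j, rfl⟩
    simp only [val_shiftEmb, Set.mem_ofPred_eq]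
    omega
  · rintro ⟨hd, hL⟩
    exact ⟨⟨i - d, by omega⟩, Fin.ext (by simp only [val_shiftEmb]; omega)⟩

theorem Finset.sum_range_two_mul_add_one_of_odd_eq_zero {M : Type*} [AddCommMonoid M]
    (F : ℕ → M) (hF : ∀ k, F (2 * k + 1) = 0) (n : ℕ) :
    ∑ a ∈ range (2 * n + 1), F a = ∑ k ∈ range (n + 1), F (2 * k) := by
  induction n with
  | zero => simp
  | succ n ih =>
    rw [show 2 * (n + 1) + 1 = 2 * n + 1 + 1 + 1 by ring, sum_range_succ, sum_range_succ, ih,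
      hF, add_zero, sum_range_succ _ (n + 1)]
    rfl

namespace NoncrossingMatching

instance {α : Type*} [LinearOrder α] [Finite α] : Finite (NoncrossingMatching α) :=
  inferInstanceAs (Finite {σ : Equiv.Perm α // IsNoncrossingMatching ⇑σ})

section Glue

variable {N : ℕ} (a : Fin (N + 1))

def innerEmb : Fin a ↪o Fin (N + 2) := Fin.shiftEmb 1 (by omega)

def outerEmb : Fin (N - a) ↪o Fin (N + 2) := Fin.shiftEmb (a + 2) (by omega)

@[simp]
theorem val_innerEmb (j : Fin a) : (innerEmb a j : ℕ) = j + 1 := rfl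

@[simp]
theorem val_outerEmb (j : Fin (N - a)) : (outerEmb a j : ℕ) = j + (a + 2) := rfl

theorem mem_range_innerEmb_iff {i : Fin (N + 2)} :
    i ∈ Set.range (innerEmb a) ↔ i ∈ Set.Ioo 0 a.succ := by
  rw [innerEmb, Fin.range_shiftEmb]
  simp only [Set.mem_ofPred_eq, Set.mem_Ioo, Fin.lt_def, Fin.val_zero, Fin.val_succ]
  omega

theorem mem_range_outerEmb_iff {i : Fin (N + 2)} :
    i ∈ Set.range (outerEmb a) ↔ a.succ < i := by
  rw [outerEmb, Fin.range_shiftEmb]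
  simp only [Set.mem_ofPred_eq, Fin.lt_def, Fin.val_succ]
  omega

theorem eq_zero_or_eq_succ_or_inner_or_outer (i : Fin (N + 2)) :
    i = 0 ∨ i = a.succ ∨ i ∈ Set.range (innerEmb a) ∨ i ∈ Set.range (outerEmb a) := by
  rw [mem_range_innerEmb_iff, mem_range_outerEmb_iff]
  simp only [Set.mem_Ioo, Fin.lt_def, Fin.ext_iff, Fin.val_zero, Fin.val_succ]
  omega

variable (f : Fin a → Fin a) (g : Fin (N - a) → Fin (N - a))

/-- The arc `{0, a + 1}`, with `f` on the points inside it and `g` on the points after it. -/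
def glue (i : Fin (N + 2)) : Fin (N + 2) :=
  if h₀ : (i : ℕ) = 0 then a.succ
  else if h₁ : (i : ℕ) ≤ a then innerEmb a (f ⟨i - 1, by omega⟩)
  else if h₂ : (i : ℕ) = a + 1 then 0
  else outerEmb a (g ⟨i - (a + 2), by omega⟩)

@[simp]
theorem glue_zero : glue a f g 0 = a.succ := rfl

@[simp]
theorem glue_succ : glue a f g a.succ = 0 := by
  simp [glue]

theorem semiconj_innerEmb_glue : Semiconj (innerEmb a) f (glue a f g) := by
  intro j
  have : (j : ℕ) + 1 ≤ a := j.isLt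
  simp [glue, this]

theorem semiconj_outerEmb_glue : Semiconj (outerEmb a) g (glue a f g) := by
  intro j
  have h₁ : ¬ (j : ℕ) + (a + 2) ≤ a := by omega
  have h₂ : (j : ℕ) + (a + 2) ≠ a + 1 := by omega
  simp [glue, h₁, h₂]

theorem isNoncrossingMatching_glue (hf : IsNoncrossingMatching f)
    (hg : IsNoncrossingMatching g) : IsNoncrossingMatching (glue a f g) := by
  have hin := semiconj_innerEmb_glue a f g
  have hout := semiconj_outerEmb_glue a f g
  refine ⟨fun i => ?_, fun i => ?_, ?_⟩
  · rcases eq_zero_or_eq_succ_or_inner_or_outer a i with rfl | rfl | ⟨j, rfl⟩ | ⟨j, rfl⟩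
    · rw [glue_zero, glue_succ]
    · rw [glue_succ, glue_zero]
    · rw [← hin, ← hin, hf.1]
    · rw [← hout, ← hout, hg.1]
  · rcases eq_zero_or_eq_succ_or_inner_or_outer a i with rfl | rfl | ⟨j, rfl⟩ | ⟨j, rfl⟩
    · rw [glue_zero]; exact Fin.succ_ne_zero a
    · rw [glue_succ]; exact (Fin.succ_ne_zero a).symm
    · rw [← hin]; exact (innerEmb a).injective.ne (hf.2.1 j)
    · rw [← hout]; exact (outerEmb a).injective.ne (hg.2.1 j)
  · -- each arc lies inside the arc `{0, a + 1}`, after it, or is it, so a crossing of two arcs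
    -- of the same block is one of `f` or `g`, and the other cases are ruled out by position
    rintro ⟨i, j, hij, hji, hcross⟩
    rcases eq_zero_or_eq_succ_or_inner_or_outer a i with rfl | rfl | ⟨k, rfl⟩ | ⟨k, rfl⟩ <;>
      rcases eq_zero_or_eq_succ_or_inner_or_outer a j with rfl | rfl | ⟨l, rfl⟩ | ⟨l, rfl⟩ <;>
      simp only [glue_zero, glue_succ, ← hin _, ← hout _, OrderEmbedding.lt_iff_lt]
        at hij hji hcross
    all_goals first
      | exact hf.2.2 ⟨k, l, hij, hji, hcross⟩
      | exact hg.2.2 ⟨k, l, hij, hji, hcross⟩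
      | simp only [Fin.lt_def, Fin.val_zero, Fin.val_succ, val_innerEmb, val_outerEmb]
          at hij hji hcross
        omega

theorem glue_injective2 : Injective2 (glue a) := by
  intro f f' g g' h
  refine ⟨funext fun j => (innerEmb a).injective ?_, funext fun j => (outerEmb a).injective ?_⟩
  · rw [semiconj_innerEmb_glue a f g, h, semiconj_innerEmb_glue]
  · rw [semiconj_outerEmb_glue a f g, h, semiconj_outerEmb_glue]

end Glue

theorem exists_glue_eq {N : ℕ} {σ : Fin (N + 2) → Fin (N + 2)} (hσ : IsNoncrossingMatching σ) :
    ∃ a f g, IsNoncrossingMatching f ∧ IsNoncrossingMatching g ∧ glue a f g = σ := by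
  obtain ⟨a, ha⟩ := Fin.exists_succ_eq.2 (hσ.2.1 0)
  have hσa : σ a.succ = 0 := by rw [ha, hσ.1]
  have hin : ∀ j, σ (innerEmb a j) ∈ Set.range (innerEmb a) := fun j => by
    have hj : innerEmb a j ∈ Set.Ioo 0 (σ 0) := ha ▸ (mem_range_innerEmb_iff a).1 ⟨j, rfl⟩
    rw [mem_range_innerEmb_iff, ha]
    exact hσ.apply_mem_Ioo hj
  have hout : ∀ j, σ (outerEmb a j) ∈ Set.range (outerEmb a) := fun j => by
    have hj : a.succ < outerEmb a j := (mem_range_outerEmb_iff a).1 ⟨j, rfl⟩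
    rw [mem_range_outerEmb_iff]
    -- otherwise `σ` would map a point after `a + 1` into the arc `{0, a + 1}`, and back
    by_contra! hle
    have h0 : σ (outerEmb a j) ≠ 0 := fun h => hj.ne' (by rw [← hσ.1 (outerEmb a j), h, ha])
    have hs : σ (outerEmb a j) ≠ σ 0 := fun h => (Fin.not_lt_zero _) (hσ.1.injective h ▸ hj)
    have hmem : σ (outerEmb a j) ∈ Set.Ioo 0 (σ 0) :=
      ⟨Fin.pos_iff_ne_zero.2 h0, (ha ▸ hle).lt_of_ne hs⟩
    have := (hσ.apply_mem_Ioo hmem).2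
    rw [hσ.1, ← ha] at this
    exact hj.not_gt this
  choose f hf using hin
  choose g hg using hout
  refine ⟨a, f, g, hσ.of_semiconj _ hf, hσ.of_semiconj _ hg, funext fun i => ?_⟩
  rcases eq_zero_or_eq_succ_or_inner_or_outer a i with rfl | rfl | ⟨j, rfl⟩ | ⟨j, rfl⟩
  · exact ha
  · rw [glue_succ, hσa]
  · rw [← semiconj_innerEmb_glue, hf]
  · rw [← semiconj_outerEmb_glue, hg]

def glueMatching {N : ℕ}
    (x : Σ a : Fin (N + 1), NoncrossingMatching (Fin a) × NoncrossingMatching (Fin (N - a))) :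
    NoncrossingMatching (Fin (N + 2)) :=
  let h := isNoncrossingMatching_glue x.1 _ _ x.2.1.2 x.2.2.2
  ⟨h.1.toPerm _, h⟩

theorem glueMatching_bijective (N : ℕ) : Bijective (glueMatching (N := N)) := by
  refine ⟨?_, fun ⟨σ, hσ⟩ => ?_⟩
  · rintro ⟨a, ⟨f, hf⟩, ⟨g, hg⟩⟩ ⟨a', ⟨f', hf'⟩, ⟨g', hg'⟩⟩ h
    have h' : glue a f g = glue a' f' g' := congrArg (fun x : NoncrossingMatching _ => ⇑x.1) h
    obtain rfl : a = a' := Fin.succ_injective _ (by rw [← glue_zero a f g, h', glue_zero])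
    obtain ⟨hff', hgg'⟩ := glue_injective2 a h'
    obtain rfl := Equiv.coe_fn_injective hff'
    obtain rfl := Equiv.coe_fn_injective hgg'
    rfl
  · obtain ⟨a, f, g, hf, hg, h⟩ := exists_glue_eq hσ
    exact ⟨⟨a, ⟨hf.1.toPerm _, hf⟩, ⟨hg.1.toPerm _, hg⟩⟩, Subtype.ext (Equiv.ext (congrFun h))⟩

theorem card_fin_zero : Nat.card (NoncrossingMatching (Fin 0)) = 1 := by
  refine Nat.card_eq_one_iff_unique.2 ⟨⟨fun σ τ => Subtype.ext (Subsingleton.elim _ _)⟩,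
    ⟨⟨1, fun i => i.elim0, fun i => i.elim0, fun ⟨i, _⟩ => i.elim0⟩⟩⟩

theorem card_fin_one : Nat.card (NoncrossingMatching (Fin 1)) = 0 :=
  Nat.card_eq_zero.2 (Or.inl ⟨fun σ => σ.2.2.1 0 (Subsingleton.elim _ _)⟩)

theorem card_fin_add_two (N : ℕ) :
    Nat.card (NoncrossingMatching (Fin (N + 2))) = ∑ a ∈ range (N + 1),
      Nat.card (NoncrossingMatching (Fin a)) * Nat.card (NoncrossingMatching (Fin (N - a))) := by
  rw [← Nat.card_eq_of_bijective _ (glueMatching_bijective N), Nat.card_sigma,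
    ← Fin.sum_univ_eq_sum_range]
  simp only [Nat.card_prod]

theorem card_fin_two_mul_add_one (n : ℕ) :
    Nat.card (NoncrossingMatching (Fin (2 * n + 1))) = 0 := by
  induction n using Nat.strong_induction_on with
  | _ n ih =>
  rcases n with _ | n
  · exact card_fin_one
  rw [show 2 * (n + 1) + 1 = 2 * n + 1 + 2 by ring, card_fin_add_two]
  refine sum_eq_zero fun a ha => ?_
  rw [mem_range] at ha
  obtain ⟨k, rfl | rfl⟩ := Nat.even_or_odd' a
  · rw [show 2 * n + 1 - 2 * k = 2 * (n - k) + 1 by omega, ih (n - k) (by omega), mul_zero]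
  · rw [ih k (by omega), zero_mul]

theorem card_fin_two_mul (n : ℕ) : Nat.card (NoncrossingMatching (Fin (2 * n))) = catalan n := by
  induction n using Nat.strong_induction_on with
  | _ n ih =>
  rcases n with _ | n
  · rw [catalan_zero]; exact card_fin_zero
  have hodd (k : ℕ) : Nat.card (NoncrossingMatching (Fin (2 * k + 1))) *
      Nat.card (NoncrossingMatching (Fin (2 * n - (2 * k + 1)))) = 0 := by
    rw [card_fin_two_mul_add_one, zero_mul]
  rw [show 2 * (n + 1) = 2 * n + 2 by ring, card_fin_add_two,
    sum_range_two_mul_add_one_of_odd_eq_zero _ hodd, catalan_succ, Fin.sum_univ_eq_sum_range (fun k => catalan k * catalan (n - k))]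
  refine sum_congr rfl fun k hk => ?_
  rw [mem_range] at hk
  rw [ih k (by omega), show 2 * n - 2 * k = 2 * (n - k) by omega, ih (n - k) (by omega)]

end NoncrossingMatching

/-- The number of crossingless matchings of `2n` points, i.e. of fixed-point-free
involutions `σ` of `Fin (2n)` with no indices `i < j < σ(i) < σ(j)`, equals the
`n`-th Catalan number. -/
theorem card_noncrossing_matchings (n : ℕ) :
    Nat.card {σ : Equiv.Perm (Fin (2 * n)) //
        (∀ i, σ (σ i) = i) ∧ (∀ i, σ i ≠ i) ∧
        ¬∃ i j : Fin (2 * n), i < j ∧ j < σ i ∧ σ i < σ j} = catalan n :=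
  NoncrossingMatching.card_fin_two_mul n
end

section
/- Let X be a finite type and let a, b be fixed-point-free involutive permutations of X. Then the number of orbits of the composite permutation a∘b on X (counting fixed points as singleton orbits) equals twice the number of orbits of the subgroup of permutations generated by a and b acting on X. Consequently, the number κ(a,b) of closed loops obtained by gluing the matching diagrams of a and b along X is half the number of orbits of a∘b. -/
/-!
Put `c = a * b`. As `a` and `b` are involutions, `a c a = c⁻¹`, so every element of `⟨a, b⟩` is
`cⁿ` or `cⁿ a`, and the `⟨a, b⟩`-orbit of `x` is the union of the `⟨c⟩`-orbits of `x` and `a x`.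
These two `⟨c⟩`-orbits are distinct: if `c²ʲ x = a x` then `cʲ x` is fixed by `a`, and if
`c²ʲ⁺¹ x = a x` then `cʲ x` is fixed by `b`. Hence every `⟨a, b⟩`-orbit splits into exactly two
`⟨c⟩`-orbits.
-/

open MulAction Subgroup

section Counting

variable {M X : Type*} [Group M] [MulAction M X]

theorem MulAction.mem_orbit_zpowers_iff {g : M} {x y : X} :
    y ∈ orbit (zpowers g) x ↔ ∃ n : ℤ, g ^ n • x = y := by
  rw [mem_orbit_iff, exists_zpowers]
  rfl

theorem MulAction.orbit_subset_orbit_of_le {H K : Subgroup M} (hHK : H ≤ K) (x : X) :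
    orbit H x ⊆ orbit K x := by
  rintro _ ⟨h, rfl⟩
  exact ⟨⟨h, hHK h.2⟩, rfl⟩

theorem MulAction.orbitRel.Quotient.mk_eq_mk_iff {H : Subgroup M} {x y : X} :
    (⟦x⟧ : orbitRel.Quotient H X) = ⟦y⟧ ↔ x ∈ MulAction.orbit H y :=
  Quotient.eq.trans orbitRel_apply

theorem MulAction.card_orbitRel_quotient_eq_two_mul {H K : Subgroup M} (hHK : H ≤ K)
    {g : M} (hg : g ∈ K) (h_notMem : ∀ x : X, g • x ∉ orbit H x)
    (h_subset : ∀ x : X, orbit K x ⊆ orbit H x ∪ orbit H (g • x)) :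
    Nat.card (orbitRel.Quotient H X) = 2 * Nat.card (orbitRel.Quotient K X) := by
  let rep (ω : orbitRel.Quotient K X) (i : Bool) : X := cond i (g • ω.out) ω.out
  have mk_rep (ω i) : (⟦rep ω i⟧ : orbitRel.Quotient K X) = ω := by
    cases i
    · exact ω.out_eq
    · conv_rhs => rw [← ω.out_eq]
      exact orbitRel.Quotient.mk_eq_mk_iff.2 ⟨⟨g, hg⟩, rfl⟩
  let φ (p : orbitRel.Quotient K X × Bool) : orbitRel.Quotient H X := ⟦rep p.1 p.2⟧
  have hφ : Function.Bijective φ := by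
    constructor
    · rintro ⟨ω, i⟩ ⟨ω', j⟩ h
      obtain rfl : ω = ω' := by
        rw [← mk_rep ω i, ← mk_rep ω' j, orbitRel.Quotient.mk_eq_mk_iff]
        exact orbit_subset_orbit_of_le hHK _ (orbitRel.Quotient.mk_eq_mk_iff.1 h)
      have h := orbitRel.Quotient.mk_eq_mk_iff.1 h
      cases i <;> cases j
      · rfl
      · exact (h_notMem _ (mem_orbit_symm.1 h)).elim
      · exact (h_notMem _ h).elim
      · rfl
    · rintro ⟨x⟩
      let ω : orbitRel.Quotient K X := ⟦x⟧
      have hx : x ∈ orbit K ω.out := orbitRel.Quotient.mk_eq_mk_iff.1 ω.out_eq.symm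
      rcases h_subset _ hx with hx | hx
      · exact ⟨(ω, false), (orbitRel.Quotient.mk_eq_mk_iff.2 hx).symm⟩
      · exact ⟨(ω, true), (orbitRel.Quotient.mk_eq_mk_iff.2 hx).symm⟩
  rw [← Nat.card_eq_of_bijective φ hφ, Nat.card_prod, Nat.card_eq_fintype_card (α := Bool),
    Fintype.card_bool, mul_comm]

end Counting

section Involutions

variable {G : Type*} [Group G] {a b : G}

theorem mul_zpow_mul_eq_zpow_neg_mul (ha : a * a = 1) (hb : b * b = 1) (n : ℤ) :
    a * (a * b) ^ n = (a * b) ^ (-n) * a := by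
  have ha' : a⁻¹ = a := inv_eq_of_mul_eq_one_left ha
  have hb' : b⁻¹ = b := inv_eq_of_mul_eq_one_left hb
  have hconj : a * (a * b) * a⁻¹ = (a * b)⁻¹ := by
    rw [mul_inv_rev, ha', hb', ← mul_assoc, ha, one_mul]
  rw [zpow_neg, ← inv_zpow, ← hconj, conj_zpow, inv_mul_cancel_right]

theorem mul_zpow_mul_eq_zpow_neg_one_add_mul (ha : a * a = 1) (hb : b * b = 1) (n : ℤ) :
    b * (a * b) ^ n = (a * b) ^ (-(1 + n)) * a := by
  rw [← mul_zpow_mul_eq_zpow_neg_mul ha hb, zpow_one_add, ← mul_assoc, ← mul_assoc, ha, one_mul]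

theorem exists_zpow_of_mem_closure_pair (ha : a * a = 1) (hb : b * b = 1) {g : G}
    (hg : g ∈ closure {a, b}) : ∃ n : ℤ, g = (a * b) ^ n ∨ g = (a * b) ^ n * a := by
  have step : ∀ s ∈ ({a, b} : Set G), ∀ y : G,
      (∃ n : ℤ, y = (a * b) ^ n ∨ y = (a * b) ^ n * a) →
        ∃ n : ℤ, s * y = (a * b) ^ n ∨ s * y = (a * b) ^ n * a := by
    rintro s (rfl | rfl) y ⟨n, rfl | rfl⟩
    · exact ⟨-n, .inr (mul_zpow_mul_eq_zpow_neg_mul ha hb n)⟩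
    · refine ⟨-n, .inl ?_⟩
      rw [← mul_assoc, mul_zpow_mul_eq_zpow_neg_mul ha hb, mul_assoc, ha, mul_one]
    · exact ⟨-(1 + n), .inr (mul_zpow_mul_eq_zpow_neg_one_add_mul ha hb n)⟩
    · refine ⟨-(1 + n), .inl ?_⟩
      rw [← mul_assoc, mul_zpow_mul_eq_zpow_neg_one_add_mul ha hb, mul_assoc, ha, mul_one]
  induction hg using closure_induction_left with
  | one => exact ⟨0, .inl (zpow_zero _).symm⟩
  | mul_left s hs y _ ih => exact step s hs y ih
  | inv_mul_cancel s hs y _ ih =>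
    obtain rfl | rfl := hs
    · rw [inv_eq_of_mul_eq_one_left ha]; exact step _ (.inl rfl) y ih
    · rw [inv_eq_of_mul_eq_one_left hb]; exact step _ (.inr rfl) y ih

variable {X : Type*} [MulAction G X]

theorem zpow_mul_smul_ne_smul (ha : a * a = 1) (hb : b * b = 1) (ha' : ∀ x : X, a • x ≠ x)
    (hb' : ∀ x : X, b • x ≠ x) (n : ℤ) (x : X) : (a * b) ^ n • x ≠ a • x := by
  intro hx
  have hshift (m k : ℤ) (hk : -m + n = k) : (a * b) ^ (-m) • a • x = (a * b) ^ k • x := by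
    rw [← hx, smul_smul, ← zpow_add, hk]
  obtain ⟨j, rfl | rfl⟩ := Int.even_or_odd' n
  · refine ha' ((a * b) ^ j • x) ?_
    rw [smul_smul, mul_zpow_mul_eq_zpow_neg_mul ha hb, mul_smul, hshift j j (by ring)]
  · refine hb' ((a * b) ^ j • x) ?_
    rw [smul_smul, mul_zpow_mul_eq_zpow_neg_one_add_mul ha hb, mul_smul, hshift (1 + j) j (by ring)]

theorem smul_notMem_orbit_zpowers_mul (ha : a * a = 1) (hb : b * b = 1)
    (ha' : ∀ x : X, a • x ≠ x) (hb' : ∀ x : X, b • x ≠ x) (x : X) :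
    a • x ∉ orbit (zpowers (a * b)) x := by
  rw [mem_orbit_zpowers_iff]
  rintro ⟨n, hn⟩
  exact zpow_mul_smul_ne_smul ha hb ha' hb' n x hn

theorem orbit_closure_pair_subset (ha : a * a = 1) (hb : b * b = 1) (x : X) :
    orbit (closure {a, b}) x ⊆ orbit (zpowers (a * b)) x ∪ orbit (zpowers (a * b)) (a • x) := by
  rintro _ ⟨⟨g, hg⟩, rfl⟩
  obtain ⟨n, rfl | rfl⟩ := exists_zpow_of_mem_closure_pair ha hb hg
  · exact .inl (mem_orbit_zpowers_iff.2 ⟨n, rfl⟩)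
  · exact .inr (mem_orbit_zpowers_iff.2 ⟨n, (mul_smul _ _ _).symm⟩)

theorem card_orbitRel_quotient_zpowers_mul_eq_two_mul (ha : a * a = 1) (hb : b * b = 1)
    (ha' : ∀ x : X, a • x ≠ x) (hb' : ∀ x : X, b • x ≠ x) :
    Nat.card (orbitRel.Quotient (zpowers (a * b)) X) =
      2 * Nat.card (orbitRel.Quotient (closure {a, b}) X) := by
  have ha_mem : a ∈ closure {a, b} := subset_closure (.inl rfl)
  have hb_mem : b ∈ closure {a, b} := subset_closure (.inr rfl)
  exact card_orbitRel_quotient_eq_two_mul (zpowers_le.2 (mul_mem ha_mem hb_mem)) ha_mem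
    (smul_notMem_orbit_zpowers_mul ha hb ha' hb') (orbit_closure_pair_subset ha hb)

end Involutions

theorem orbits_comp_eq_two_mul_orbits_closure_general {X : Type*}
    (a b : Equiv.Perm X)
    (ha : ∀ x, a (a x) = x) (ha' : ∀ x, a x ≠ x)
    (hb : ∀ x, b (b x) = x) (hb' : ∀ x, b x ≠ x) :
    Nat.card (MulAction.orbitRel.Quotient (Subgroup.zpowers (a * b)) X) =
        2 * Nat.card (MulAction.orbitRel.Quotient
          (Subgroup.closure {a, b} : Subgroup (Equiv.Perm X)) X) ∧
      Nat.card (MulAction.orbitRel.Quotient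
          (Subgroup.closure {a, b} : Subgroup (Equiv.Perm X)) X) =
        Nat.card (MulAction.orbitRel.Quotient (Subgroup.zpowers (a * b)) X) / 2 := by
  have hcard := card_orbitRel_quotient_zpowers_mul_eq_two_mul (Equiv.ext ha) (Equiv.ext hb) ha' hb'
  exact ⟨hcard, by rw [hcard, Nat.mul_div_cancel_left _ two_pos]⟩

/-- Let `a, b` be fixed-point-free involutive permutations of a finite type `X`.
Then the number of orbits of the composite permutation `a ∘ b` on `X` equals twice
the number of orbits of the subgroup generated by `a` and `b` acting on `X`.
Consequently, the number `κ(a,b)` of closed loops obtained by gluing the matching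
diagrams of `a` and `b` (i.e. the number of orbits of the subgroup generated by
`a` and `b`) is half the number of orbits of `a ∘ b`. -/
theorem orbits_comp_eq_two_mul_orbits_closure {X : Type*} [Finite X]
    (a b : Equiv.Perm X)
    (ha : ∀ x, a (a x) = x) (ha' : ∀ x, a x ≠ x)
    (hb : ∀ x, b (b x) = x) (hb' : ∀ x, b x ≠ x) :
    Nat.card (MulAction.orbitRel.Quotient (Subgroup.zpowers (a * b)) X) =
        2 * Nat.card (MulAction.orbitRel.Quotient
          (Subgroup.closure {a, b} : Subgroup (Equiv.Perm X)) X) ∧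
      Nat.card (MulAction.orbitRel.Quotient
          (Subgroup.closure {a, b} : Subgroup (Equiv.Perm X)) X) =
        Nat.card (MulAction.orbitRel.Quotient (Subgroup.zpowers (a * b)) X) / 2 :=
  orbits_comp_eq_two_mul_orbits_closure_general a b ha ha' hb hb'
end

section
/- Let k be a field (or any integral domain), σ a type, and R = MvPolynomial σ k. Let N and n be natural numbers and M an N×N matrix over R such that: (i) for every index i, the diagonal entry M_{ii} has total degree at most n and its homogeneous component of total degree n is nonzero; (ii) for all indices i ≠ j, the off-diagonal entry M_{ij} has total degree strictly less than n. Then det M ≠ 0; in fact, the homogeneous component of det M in total degree N·n is nonzero. -/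
/-!
Under the degree bounds, taking the degree-`n` component is multiplicative, so in the Leibniz
expansion of `det M` every permutation other than the identity meets an off-diagonal entry and
contributes nothing in degree `N * n`. The identity term contributes the product of the top
components of the diagonal entries, which is nonzero over a domain.
-/

open Finset

namespace MvPolynomial

variable {R σ : Type*} [CommRing R]

theorem homogeneousComponent_mul_of_totalDegree_le {p q : MvPolynomial σ R} {a b : ℕ}
    (hp : p.totalDegree ≤ a) (hq : q.totalDegree ≤ b) :
    homogeneousComponent (a + b) (p * q) =
      homogeneousComponent a p * homogeneousComponent b q := by
  classical
  rw [← homogeneousComponent_eq_self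
    ((homogeneousComponent_isHomogeneous a p).mul (homogeneousComponent_isHomogeneous b q))]
  ext d
  simp only [coeff_homogeneousComponent, coeff_mul]
  split_ifs with hd
  · refine sum_congr rfl fun uv huv => ?_
    have hdeg : uv.1.degree + uv.2.degree = a + b := by
      rw [← map_add, mem_antidiagonal.mp huv, hd]
    rcases lt_trichotomy uv.1.degree a with h | h | h
    · rw [coeff_eq_zero_of_totalDegree_lt (d := uv.2) (by omega : q.totalDegree < uv.2.degree)]
      simp
    · simp [h, show uv.2.degree = b by omega]
    · rw [coeff_eq_zero_of_totalDegree_lt (lt_of_le_of_lt hp h)]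
      simp [h.ne']
  · rfl

theorem homogeneousComponent_prod_of_totalDegree_le {ι : Type*} (s : Finset ι)
    (f : ι → MvPolynomial σ R) (n : ι → ℕ) (h : ∀ i ∈ s, (f i).totalDegree ≤ n i) :
    homogeneousComponent (∑ i ∈ s, n i) (∏ i ∈ s, f i) =
      ∏ i ∈ s, homogeneousComponent (n i) (f i) := by
  induction s using Finset.cons_induction with
  | empty => simp
  | cons a s _ ih =>
    rw [forall_mem_cons] at h
    have hprod : (∏ i ∈ s, f i).totalDegree ≤ ∑ i ∈ s, n i :=
      (totalDegree_finsetProd s f).trans (sum_le_sum h.2)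
    rw [prod_cons, prod_cons, sum_cons, homogeneousComponent_mul_of_totalDegree_le h.1 hprod,
      ih h.2]

theorem homogeneousComponent_det_of_totalDegree_lt_offDiag {ι : Type*} [Fintype ι]
    [DecidableEq ι] (M : Matrix ι ι (MvPolynomial σ R)) (n : ℕ)
    (hdiag : ∀ i, (M i i).totalDegree ≤ n) (hoff : ∀ i j, i ≠ j → (M i j).totalDegree < n) :
    homogeneousComponent (Fintype.card ι * n) M.det = ∏ i, homogeneousComponent n (M i i) := by
  have hdeg : Fintype.card ι * n = ∑ _i : ι, n := by simp
  have hterm : ∀ g : Equiv.Perm ι, g ≠ 1 →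
      homogeneousComponent (Fintype.card ι * n) (∏ i, M (g i) i) = 0 := by
    intro g hg
    obtain ⟨i₀, hi₀⟩ : ∃ i, g i ≠ i := not_forall.mp fun h => hg (Equiv.ext h)
    refine homogeneousComponent_eq_zero _ _ ((totalDegree_finsetProd _ _).trans_lt ?_)
    rw [hdeg]
    refine sum_lt_sum (fun i _ => ?_) ⟨i₀, mem_univ _, hoff _ _ hi₀⟩
    by_cases hi : g i = i
    · rw [hi]; exact hdiag i
    · exact (hoff _ _ hi).le
  rw [Matrix.det_apply, map_sum, sum_eq_single 1
    (fun g _ hg => by rw [Units.smul_def, map_zsmul, hterm g hg, smul_zero])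
    (fun h => absurd (mem_univ _) h), Equiv.Perm.sign_one, one_smul, hdeg]
  exact homogeneousComponent_prod_of_totalDegree_le _ _ _ fun i _ => hdiag i

end MvPolynomial

open MvPolynomial

/-- Determinant lemma: if `M` is an `N × N` matrix over a multivariate polynomial
ring over an integral domain such that each diagonal entry has total degree at most
`n` with nonzero homogeneous component in degree `n`, and each off-diagonal entry
has total degree strictly less than `n`, then `det M ≠ 0`; in fact the homogeneous
component of `det M` in total degree `N·n` is nonzero. -/
theorem det_ne_zero_of_generic_diagonal {k : Type*} [CommRing k] [IsDomain k]
    {σ : Type*} (N n : ℕ) (M : Matrix (Fin N) (Fin N) (MvPolynomial σ k))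
    (hdiag : ∀ i, (M i i).totalDegree ≤ n ∧
      MvPolynomial.homogeneousComponent n (M i i) ≠ 0)
    (hoff : ∀ i j, i ≠ j → (M i j).totalDegree < n) :
    M.det ≠ 0 ∧ MvPolynomial.homogeneousComponent (N * n) M.det ≠ 0 := by
  have hdet := homogeneousComponent_det_of_totalDegree_lt_offDiag M n (fun i => (hdiag i).1) hoff
  rw [Fintype.card_fin] at hdet
  have htop : homogeneousComponent (N * n) M.det ≠ 0 :=
    hdet ▸ prod_ne_zero_iff.mpr fun i _ => (hdiag i).2
  exact ⟨fun h => htop (by rw [h, map_zero]), htop⟩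
end
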